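/- Let I be an instance of SPA-ST that admits a super-stable matching. Then for any two weakly stable matchings M1 and M2 in I and every lecturer l_k, the number of students assigned to l_k in M1 equals the number of students assigned to l_k in M2. -/

import Mathlib

open scoped Classical

/-- An instance of the Student-Project Allocation problem with lecturer
preferences over students, with Ties (SPA-ST).  `sPref s p q` means student `s`
ranks project `p` at least as highly as project `q` (`p ⪰_s q`); `lPref k t t'`
means lecturer `k` ranks student `t` at least as highly as student `t'`. -/
structure SPAST (S P L : Type) [Fintype S] [Fintype P] [Fintype L]
    [DecidableEq S] [DecidableEq P] [DecidableEq L] where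
  /-- the lecturer offering each project -/
  lec : P → L
  /-- project capacities -/
  c : P → ℕ
  /-- lecturer capacities -/
  d : L → ℕ
  cpos : ∀ p : P, 0 < c p
  dpos : ∀ k : L, 0 < d k
  /-- the set of projects acceptable to each student -/
  acc : S → Finset P
  sPref : S → P → P → Prop
  lPref : L → S → S → Prop
  sRefl : ∀ s : S, ∀ p ∈ acc s, sPref s p p
  sTrans : ∀ s : S, ∀ p ∈ acc s, ∀ q ∈ acc s, ∀ r ∈ acc s,
    sPref s p q → sPref s q r → sPref s p r
  sTotal : ∀ s : S, ∀ p ∈ acc s, ∀ q ∈ acc s, sPref s p q ∨ sPref s q p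
  lRefl : ∀ k : L, ∀ t : S, (∃ p ∈ acc t, lec p = k) → lPref k t t
  lTrans : ∀ k : L, ∀ t1 t2 t3 : S,
    (∃ p ∈ acc t1, lec p = k) → (∃ p ∈ acc t2, lec p = k) → (∃ p ∈ acc t3, lec p = k) →
    lPref k t1 t2 → lPref k t2 t3 → lPref k t1 t3
  lTotal : ∀ k : L, ∀ t1 t2 : S,
    (∃ p ∈ acc t1, lec p = k) → (∃ p ∈ acc t2, lec p = k) →
    lPref k t1 t2 ∨ lPref k t2 t1
  capLB : ∀ p : P, c p ≤ d (lec p)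
  capUB : ∀ k : L, d k ≤ ∑ p ∈ Finset.univ.filter (fun p => lec p = k), c p

namespace SPAST

variable {S P L : Type} [Fintype S] [Fintype P] [Fintype L]
  [DecidableEq S] [DecidableEq P] [DecidableEq L]

/-- `M` is a matching: pairs are acceptable, each student is matched at most once,
and project and lecturer capacities are respected. -/
def IsMatching (I : SPAST S P L) (M : Finset (S × P)) : Prop :=
  (∀ x ∈ M, x.2 ∈ I.acc x.1) ∧
  (∀ s : S, ∀ p q : P, (s, p) ∈ M → (s, q) ∈ M → p = q) ∧
  (∀ p : P, (M.filter (fun x => x.2 = p)).card ≤ I.c p) ∧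
  (∀ k : L, (M.filter (fun x => I.lec x.2 = k)).card ≤ I.d k)

/-- The set `M(p)` of students assigned to project `p` in `M`. -/
def projAsg (M : Finset (S × P)) (p : P) : Finset S :=
  (M.filter (fun x => x.2 = p)).image Prod.fst

/-- The set `M(l_k)` of students assigned to lecturer `k` in `M`. -/
def lecAsg (I : SPAST S P L) (M : Finset (S × P)) (k : L) : Finset S :=
  (M.filter (fun x => I.lec x.2 = k)).image Prod.fst

/-- `t` is a least-preferred (worst) student of lecturer `k` in the set `T`. -/
def WorstIn (I : SPAST S P L) (k : L) (T : Finset S) (t : S) : Prop :=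
  t ∈ T ∧ ∀ t' ∈ T, I.lPref k t' t

/-- `(s, p)` is a super-blocking pair for `M`. -/
def SuperBlocking (I : SPAST S P L) (M : Finset (S × P)) (s : S) (p : P) : Prop :=
  p ∈ I.acc s ∧ (s, p) ∉ M ∧
  (∀ q : P, (s, q) ∈ M → ¬(I.sPref s q p ∧ ¬I.sPref s p q)) ∧
  (((projAsg M p).card < I.c p ∧ (lecAsg I M (I.lec p)).card < I.d (I.lec p)) ∨
   ((projAsg M p).card < I.c p ∧ (lecAsg I M (I.lec p)).card = I.d (I.lec p) ∧
     (s ∈ lecAsg I M (I.lec p) ∨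
      ∃ t : S, WorstIn I (I.lec p) (lecAsg I M (I.lec p)) t ∧ I.lPref (I.lec p) s t)) ∨
   ((projAsg M p).card = I.c p ∧
     ∃ t : S, WorstIn I (I.lec p) (projAsg M p) t ∧ I.lPref (I.lec p) s t))

/-- `(s, p)` is a weakly-blocking pair for `M`. -/
def WeakBlocking (I : SPAST S P L) (M : Finset (S × P)) (s : S) (p : P) : Prop :=
  p ∈ I.acc s ∧ (s, p) ∉ M ∧
  (∀ q : P, (s, q) ∈ M → I.sPref s p q ∧ ¬I.sPref s q p) ∧
  (((projAsg M p).card < I.c p ∧ (lecAsg I M (I.lec p)).card < I.d (I.lec p)) ∨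
   ((projAsg M p).card < I.c p ∧ (lecAsg I M (I.lec p)).card = I.d (I.lec p) ∧
     (s ∈ lecAsg I M (I.lec p) ∨
      ∃ t : S, WorstIn I (I.lec p) (lecAsg I M (I.lec p)) t ∧
        (I.lPref (I.lec p) s t ∧ ¬I.lPref (I.lec p) t s))) ∨
   ((projAsg M p).card = I.c p ∧
     ∃ t : S, WorstIn I (I.lec p) (projAsg M p) t ∧
       (I.lPref (I.lec p) s t ∧ ¬I.lPref (I.lec p) t s)))

/-- `M` is a super-stable matching in `I`. -/
def SuperStable (I : SPAST S P L) (M : Finset (S × P)) : Prop :=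
  I.IsMatching M ∧ ∀ (s : S) (p : P), ¬SuperBlocking I M s p

/-- `M` is a weakly stable matching in `I`. -/
def WeaklyStable (I : SPAST S P L) (M : Finset (S × P)) : Prop :=
  I.IsMatching M ∧ ∀ (s : S) (p : P), ¬WeakBlocking I M s p

/-- `I` is an SPA-S instance: all preference lists are strictly ordered
(the preorders are antisymmetric). -/
def StrictPrefs (I : SPAST S P L) : Prop :=
  (∀ s : S, ∀ p ∈ I.acc s, ∀ q ∈ I.acc s, I.sPref s p q → I.sPref s q p → p = q) ∧
  (∀ k : L, ∀ t t' : S, (∃ p ∈ I.acc t, I.lec p = k) → (∃ p ∈ I.acc t', I.lec p = k) →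
    I.lPref k t t' → I.lPref k t' t → t = t')

/-- `I'` is an SPA-S instance obtained from `I` by breaking the ties. -/
def TieBreaking (I I' : SPAST S P L) : Prop :=
  I'.lec = I.lec ∧ I'.c = I.c ∧ I'.d = I.d ∧ I'.acc = I.acc ∧
  StrictPrefs I' ∧
  (∀ (s : S) (p q : P), I.sPref s p q → ¬I.sPref s q p →
    I'.sPref s p q ∧ ¬I'.sPref s q p) ∧
  (∀ (k : L) (t t' : S), I.lPref k t t' → ¬I.lPref k t' t →
    I'.lPref k t t' ∧ ¬I'.lPref k t' t)

end SPAST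

/-!
Fix a super-stable `M` and a weakly stable `W`; it suffices to show `|W(l)| = |M(l)|` for every
lecturer `l`. Pair the students `s` with `(s, p) ∈ W \ M` injectively with the students `t` with
`(t, q) ∈ M \ W`, maximally inside each project and then inside each lecturer. Unfolding the two
stability notions shows that the pairing sends a student who does not prefer his `M`-project to
his `W`-project to another such student, and that its inverse sends a student who strictly
prefers his `M`-project to another such student. Being injective, it maps each of these two
classes onto itself. But if `|W(l)| < |M(l)|`, maximality at `l` leaves some `t` with
`(t, q) ∈ M \ W` and `lec q = l` without a partner, and weak stability of `W` puts `t` into the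
first class; the case `|W(l)| > |M(l)|` is symmetric, with the second class.
-/

open Finset Function

section Pairing

variable {α β : Type*}

structure IsPairing (r : Finset (α × β)) (X : Finset α) (Y : Finset β) : Prop where
  subset : r ⊆ X ×ˢ Y
  injOn_fst : Set.InjOn Prod.fst (r : Set (α × β))
  injOn_snd : Set.InjOn Prod.snd (r : Set (α × β))

namespace IsPairing

variable {r : Finset (α × β)} {X : Finset α} {Y : Finset β}

lemma exists_snd [DecidableEq α] (h : IsPairing r X Y) (hr : #X ≤ #r) {x : α} (hx : x ∈ X) :
    ∃ y ∈ Y, (x, y) ∈ r := by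
  have himage : r.image Prod.fst = X :=
    eq_of_subset_of_card_le (fun _ hx' ↦ by
      obtain ⟨z, hz, rfl⟩ := mem_image.1 hx'
      exact (mem_product.1 (h.subset hz)).1) (by rwa [card_image_of_injOn h.injOn_fst])
  obtain ⟨⟨x', y⟩, hz, rfl⟩ := mem_image.1 (himage ▸ hx)
  exact ⟨y, (mem_product.1 (h.subset hz)).2, hz⟩

lemma exists_fst [DecidableEq β] (h : IsPairing r X Y) (hr : #Y ≤ #r) {y : β} (hy : y ∈ Y) :
    ∃ x ∈ X, (x, y) ∈ r := by
  have himage : r.image Prod.snd = Y :=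
    eq_of_subset_of_card_le (fun _ hy' ↦ by
      obtain ⟨z, hz, rfl⟩ := mem_image.1 hy'
      exact (mem_product.1 (h.subset hz)).2) (by rwa [card_image_of_injOn h.injOn_snd])
  obtain ⟨⟨x, y'⟩, hz, rfl⟩ := mem_image.1 (himage ▸ hy)
  exact ⟨x, (mem_product.1 (h.subset hz)).1, hz⟩

lemma union [DecidableEq α] [DecidableEq β] {r' : Finset (α × β)} {X' : Finset α}
    {Y' : Finset β} (h : IsPairing r X Y) (h' : IsPairing r' X' Y') (hX : Disjoint X X')
    (hY : Disjoint Y Y') :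
    IsPairing (r ∪ r') (X ∪ X') (Y ∪ Y') := by
  have hfst : ∀ z ∈ r, ∀ z' ∈ r', z.1 ≠ z'.1 := fun z hz z' hz' he ↦
    disjoint_left.1 hX (mem_product.1 (h.subset hz)).1 (he ▸ (mem_product.1 (h'.subset hz')).1)
  have hsnd : ∀ z ∈ r, ∀ z' ∈ r', z.2 ≠ z'.2 := fun z hz z' hz' he ↦
    disjoint_left.1 hY (mem_product.1 (h.subset hz)).2 (he ▸ (mem_product.1 (h'.subset hz')).2)
  have hdisj : Disjoint (r : Set (α × β)) r' :=
    Set.disjoint_left.2 fun z hz hz' ↦ hfst z hz z hz' rfl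
  refine ⟨union_subset_union h.subset h'.subset |>.trans ?_, ?_, ?_⟩
  · exact union_subset (product_subset_product subset_union_left subset_union_left)
      (product_subset_product subset_union_right subset_union_right)
  · rw [coe_union, Set.injOn_union hdisj]
    exact ⟨h.injOn_fst, h'.injOn_fst, hfst⟩
  · rw [coe_union, Set.injOn_union hdisj]
    exact ⟨h.injOn_snd, h'.injOn_snd, hsnd⟩

lemma biUnion [DecidableEq α] [DecidableEq β] {ι : Type*} {s : Finset ι}
    {r : ι → Finset (α × β)} {X : ι → Finset α} {Y : ι → Finset β}
    (h : ∀ i ∈ s, IsPairing (r i) (X i) (Y i))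
    (hX : (s : Set ι).PairwiseDisjoint X) (hY : (s : Set ι).PairwiseDisjoint Y) :
    IsPairing (s.biUnion r) (s.biUnion X) (s.biUnion Y) := by
  refine ⟨fun z hz ↦ ?_, fun z hz z' hz' he ↦ ?_, fun z hz z' hz' he ↦ ?_⟩
  · obtain ⟨i, hi, hz⟩ := mem_biUnion.1 hz
    obtain ⟨hx, hy⟩ := mem_product.1 ((h i hi).subset hz)
    exact mem_product.2 ⟨mem_biUnion.2 ⟨i, hi, hx⟩, mem_biUnion.2 ⟨i, hi, hy⟩⟩
  all_goals
    obtain ⟨i, hi, hz⟩ := mem_biUnion.1 (mem_coe.1 hz)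
    obtain ⟨j, hj, hz'⟩ := mem_biUnion.1 (mem_coe.1 hz')
    have hzi := mem_product.1 ((h i hi).subset hz)
    have hzj := mem_product.1 ((h j hj).subset hz')
  · obtain rfl : i = j := hX.elim_finset hi hj _ hzi.1 (he ▸ hzj.1)
    exact (h i hi).injOn_fst hz hz' he
  · obtain rfl : i = j := hY.elim_finset hi hj _ hzi.2 (he ▸ hzj.2)
    exact (h i hi).injOn_snd hz hz' he

lemma mem_iff_of_mem_biUnion [DecidableEq α] [DecidableEq β] {ι : Type*} [Fintype ι]
    {r : ι → Finset (α × β)} {X : ι → Finset α} {Y : ι → Finset β}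
    (h : ∀ i, IsPairing (r i) (X i) (Y i)) (hX : Pairwise (Disjoint on X))
    (hY : Pairwise (Disjoint on Y)) {x : α} {y : β} (hxy : (x, y) ∈ univ.biUnion r) (i : ι) :
    x ∈ X i ↔ y ∈ Y i := by
  obtain ⟨j, -, hxy⟩ := mem_biUnion.1 hxy
  obtain ⟨hx, hy⟩ := mem_product.1 ((h j).subset hxy)
  constructor
  · intro hxi
    obtain rfl : i = j := by_contra fun hij ↦ disjoint_left.1 (hX hij) hxi hx
    exact hy
  · intro hyi
    obtain rfl : i = j := by_contra fun hij ↦ disjoint_left.1 (hY hij) hyi hy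
    exact hx

end IsPairing

lemma exists_isPairing_card_eq_min (X : Finset α) (Y : Finset β) :
    ∃ r, IsPairing r X Y ∧ #r = min #X #Y := by
  obtain ⟨X', hX', hX'card⟩ := exists_subset_card_eq (min_le_left #X #Y)
  obtain ⟨Y', hY', hY'card⟩ := exists_subset_card_eq (min_le_right #X #Y)
  let e := equivOfCardEq (hX'card.trans hY'card.symm)
  let f : X' ↪ α × β := ⟨fun x ↦ (x, e x), fun x x' hxx' ↦ Subtype.ext (congrArg Prod.fst hxx')⟩
  refine ⟨X'.attach.map f, ⟨fun z hz ↦ ?_, ?_, ?_⟩, by rw [card_map, card_attach, hX'card]⟩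
  · obtain ⟨x, -, rfl⟩ := mem_map.1 hz
    exact mem_product.2 ⟨hX' x.2, hY' (e x).2⟩
  · rintro _ hz _ hz' he
    obtain ⟨x, -, rfl⟩ := mem_map.1 (mem_coe.1 hz)
    obtain ⟨x', -, rfl⟩ := mem_map.1 (mem_coe.1 hz')
    rw [Subtype.ext he]
  · rintro _ hz _ hz' he
    obtain ⟨x, -, rfl⟩ := mem_map.1 (mem_coe.1 hz)
    obtain ⟨x', -, rfl⟩ := mem_map.1 (mem_coe.1 hz')
    rw [e.injective (Subtype.ext he)]

lemma IsPairing.exists_superset_card_eq_min [DecidableEq α] [DecidableEq β]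
    {r₀ : Finset (α × β)} {X : Finset α} {Y : Finset β} (h₀ : IsPairing r₀ X Y) :
    ∃ r, r₀ ⊆ r ∧ IsPairing r X Y ∧ #r = min #X #Y := by
  set X₀ := r₀.image Prod.fst
  set Y₀ := r₀.image Prod.snd
  have hX₀ : X₀ ⊆ X := fun x hx ↦ by
    obtain ⟨z, hz, rfl⟩ := mem_image.1 hx; exact (mem_product.1 (h₀.subset hz)).1
  have hY₀ : Y₀ ⊆ Y := fun y hy ↦ by
    obtain ⟨z, hz, rfl⟩ := mem_image.1 hy; exact (mem_product.1 (h₀.subset hz)).2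
  have h₀' : IsPairing r₀ X₀ Y₀ :=
    ⟨fun z hz ↦ mem_product.2 ⟨mem_image_of_mem _ hz, mem_image_of_mem _ hz⟩,
      h₀.injOn_fst, h₀.injOn_snd⟩
  obtain ⟨r₁, h₁, hcard⟩ := exists_isPairing_card_eq_min (X \ X₀) (Y \ Y₀)
  refine ⟨r₀ ∪ r₁, subset_union_left, ?_, ?_⟩
  · simpa [union_sdiff_of_subset hX₀, union_sdiff_of_subset hY₀] using
      h₀'.union h₁ disjoint_sdiff disjoint_sdiff
  · have hdisj : Disjoint r₀ r₁ := disjoint_left.2 fun z hz hz' ↦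
      (mem_sdiff.1 (mem_product.1 (h₁.subset hz')).1).2 (mem_image_of_mem _ hz)
    have hX₀card : #X₀ = #r₀ := card_image_of_injOn h₀.injOn_fst
    have hY₀card : #Y₀ = #r₀ := card_image_of_injOn h₀.injOn_snd
    have := card_le_card hX₀
    have := card_le_card hY₀
    rw [card_union_of_disjoint hdisj, hcard, card_sdiff_of_subset hX₀, card_sdiff_of_subset hY₀]
    omega

end Pairing

section BlockPairing

variable {α β ι κ : Type*}

structure IsBlockPairing (A : ι → Finset α) (B : ι → Finset β) (A' : κ → Finset α)
    (B' : κ → Finset β) (r : Finset (α × β)) : Prop where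
  fst_eq : ∀ {x x' y}, (x, y) ∈ r → (x', y) ∈ r → x = x'
  snd_eq : ∀ {x y y'}, (x, y) ∈ r → (x, y') ∈ r → y = y'
  mem_iff : ∀ {x y k}, (x, y) ∈ r → (x ∈ A' k ↔ y ∈ B' k)
  block_snd : ∀ i, #(A i) ≤ #(B i) → ∀ x ∈ A i, ∃ y ∈ B i, (x, y) ∈ r
  block_fst : ∀ i, #(B i) ≤ #(A i) → ∀ y ∈ B i, ∃ x ∈ A i, (x, y) ∈ r
  superblock_snd : ∀ k, #(A' k) ≤ #(B' k) → ∀ x ∈ A' k, ∃ y ∈ B' k, (x, y) ∈ r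
  superblock_fst : ∀ k, #(B' k) ≤ #(A' k) → ∀ y ∈ B' k, ∃ x ∈ A' k, (x, y) ∈ r

lemma pairwise_disjoint_biUnion_filter {γ : Type*} [DecidableEq γ] [Fintype ι] [DecidableEq κ]
    {C : ι → Finset γ} (hC : Pairwise (Disjoint on C)) (g : ι → κ) :
    Pairwise (Disjoint on (fun k ↦ (univ.filter (g · = k)).biUnion C)) := fun k k' hkk' ↦ by
  simp only [Function.onFun, disjoint_biUnion_left, disjoint_biUnion_right, mem_filter,
    mem_univ, true_and]
  rintro i rfl j rfl
  exact hC fun hij ↦ hkk' (congrArg g hij)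

lemma exists_isBlockPairing [DecidableEq α] [DecidableEq β] [Fintype ι] [Fintype κ]
    [DecidableEq κ] {A : ι → Finset α} {B : ι → Finset β} {A' : κ → Finset α} {B' : κ → Finset β}
    (g : ι → κ) (hA : Pairwise (Disjoint on A)) (hB : Pairwise (Disjoint on B))
    (hA' : ∀ k, A' k = (univ.filter (g · = k)).biUnion A)
    (hB' : ∀ k, B' k = (univ.filter (g · = k)).biUnion B) :
    ∃ r, IsBlockPairing A B A' B' r := by
  have hA'disj : Pairwise (Disjoint on A') := funext hA' ▸ pairwise_disjoint_biUnion_filter hA g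
  have hB'disj : Pairwise (Disjoint on B') := funext hB' ▸ pairwise_disjoint_biUnion_filter hB g
  choose r₀ hr₀ hr₀card using fun i ↦ exists_isPairing_card_eq_min (A i) (B i)
  have hblocks (k : κ) : IsPairing ((univ.filter (g · = k)).biUnion r₀) (A' k) (B' k) := by
    rw [hA', hB']
    exact .biUnion (fun i _ ↦ hr₀ i) (hA.set_pairwise _) (hB.set_pairwise _)
  choose r₁ hr₀₁ hr₁ hr₁card using fun k ↦ (hblocks k).exists_superset_card_eq_min
  have hr : IsPairing (univ.biUnion r₁) (univ.biUnion A') (univ.biUnion B') :=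
    .biUnion (fun k _ ↦ hr₁ k) (hA'disj.set_pairwise _) (hB'disj.set_pairwise _)
  have hr₀r (i : ι) : r₀ i ⊆ univ.biUnion r₁ :=
    (subset_biUnion_of_mem r₀ (by simp)).trans <| (hr₀₁ (g i)).trans <|
      subset_biUnion_of_mem r₁ (mem_univ _)
  refine ⟨univ.biUnion r₁, fun hz hz' ↦ congrArg Prod.fst (hr.injOn_snd hz hz' rfl),
    fun hz hz' ↦ congrArg Prod.snd (hr.injOn_fst hz hz' rfl),
    fun hz ↦ IsPairing.mem_iff_of_mem_biUnion hr₁ hA'disj hB'disj hz _, ?_, ?_, ?_, ?_⟩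
  · intro i hi x hx
    obtain ⟨y, hy, hxy⟩ := (hr₀ i).exists_snd (by rw [hr₀card i, min_eq_left hi]) hx
    exact ⟨y, hy, hr₀r i hxy⟩
  · intro i hi y hy
    obtain ⟨x, hx, hxy⟩ := (hr₀ i).exists_fst (by rw [hr₀card i, min_eq_right hi]) hy
    exact ⟨x, hx, hr₀r i hxy⟩
  · intro k hk x hx
    obtain ⟨y, hy, hxy⟩ := (hr₁ k).exists_snd (by rw [hr₁card k, min_eq_left hk]) hx
    exact ⟨y, hy, subset_biUnion_of_mem r₁ (mem_univ k) hxy⟩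
  · intro k hk y hy
    obtain ⟨x, hx, hxy⟩ := (hr₁ k).exists_fst (by rw [hr₁card k, min_eq_right hk]) hy
    exact ⟨x, hx, subset_biUnion_of_mem r₁ (mem_univ k) hxy⟩

namespace IsBlockPairing

variable {A : ι → Finset α} {B : ι → Finset β} {A' : κ → Finset α} {B' : κ → Finset β}
  {r : Finset (α × β)} {k : κ}

lemma exists_snd_unpaired (h : IsBlockPairing A B A' B' r) (hk : #(A' k) < #(B' k)) :
    ∃ y ∈ B' k, ∀ x, (x, y) ∉ r := by
  by_contra! hpaired
  have := card_le_card_of_forall_subsingleton' (fun x y ↦ (x, y) ∈ r)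
    (fun y hy ↦ by obtain ⟨x, hx⟩ := hpaired y hy; exact ⟨x, (h.mem_iff hx).2 hy, hx⟩)
    (fun _ _ _ hy _ hy' ↦ h.snd_eq hy.2 hy'.2)
  omega

lemma exists_fst_unpaired (h : IsBlockPairing A B A' B' r) (hk : #(B' k) < #(A' k)) :
    ∃ x ∈ A' k, ∀ y, (x, y) ∉ r := by
  by_contra! hpaired
  have := card_le_card_of_forall_subsingleton (fun x y ↦ (x, y) ∈ r)
    (fun x hx ↦ by obtain ⟨y, hy⟩ := hpaired x hx; exact ⟨y, (h.mem_iff hy).1 hx, hy⟩)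
    (fun _ _ _ hx _ hx' ↦ h.fst_eq hx.2 hx'.2)
  omega

end IsBlockPairing

end BlockPairing

lemma Finset.exists_rel_of_forall_exists_rel {α : Type*} {ρ : α → α → Prop} {V : Finset α}
    (hρ : ∀ {x x' y}, ρ x y → ρ x' y → x = x') (h : ∀ x ∈ V, ∃ y ∈ V, ρ x y) {y : α}
    (hy : y ∈ V) : ∃ x, ρ x y := by
  by_contra! hfree
  have := card_le_card_of_forall_subsingleton ρ (t := V.erase y)
    (fun x hx ↦ by
      obtain ⟨y', hy', hxy'⟩ := h x hx
      exact ⟨y', mem_erase.2 ⟨fun h ↦ hfree x (h ▸ hxy'), hy'⟩, hxy'⟩)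
    (fun _ _ _ hx _ hx' ↦ hρ hx.2 hx'.2)
  have := card_erase_lt_of_mem hy
  omega

namespace SPAST

section ProjAsg

variable {S P : Type} [DecidableEq S] [DecidableEq P] {N N' : Finset (S × P)} {s : S} {p : P}

lemma mem_projAsg : s ∈ projAsg N p ↔ (s, p) ∈ N := by
  simp [projAsg]

lemma projAsg_mono (h : N ⊆ N') : projAsg N p ⊆ projAsg N' p :=
  image_subset_image (filter_subset_filter _ h)

lemma projAsg_sdiff : projAsg (N \ N') p = projAsg N p \ projAsg N' p := by
  ext; simp [mem_projAsg]

lemma card_projAsg : #(projAsg N p) = #(N.filter (fun x ↦ x.2 = p)) :=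
  card_image_of_injOn fun _ hx _ hy hxy ↦
    Prod.ext hxy ((mem_filter.1 hx).2.trans (mem_filter.1 hy).2.symm)

lemma card_projAsg_sdiff_le_iff :
    #(projAsg (N \ N') p) ≤ #(projAsg (N' \ N) p) ↔ #(projAsg N p) ≤ #(projAsg N' p) := by
  rw [projAsg_sdiff, projAsg_sdiff]
  exact card_sdiff_le_card_sdiff_iff

end ProjAsg

variable {S P L : Type} [Fintype S] [Fintype P] [Fintype L]
  [DecidableEq S] [DecidableEq P] [DecidableEq L] {I : SPAST S P L}

def sStrict (I : SPAST S P L) (s : S) (p q : P) : Prop := I.sPref s p q ∧ ¬I.sPref s q p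

def lStrict (I : SPAST S P L) (k : L) (t u : S) : Prop := I.lPref k t u ∧ ¬I.lPref k u t

/-- The students on which lecturer `k`'s preorder is defined. -/
def AppliesTo (I : SPAST S P L) (k : L) (t : S) : Prop := ∃ p ∈ I.acc t, I.lec p = k

section Assignments

variable {N N' : Finset (S × P)} {s : S} {p : P} {k : L}

lemma mem_lecAsg : s ∈ lecAsg I N k ↔ ∃ p, (s, p) ∈ N ∧ I.lec p = k := by
  simp [lecAsg]

lemma lecAsg_mono (h : N ⊆ N') : lecAsg I N k ⊆ lecAsg I N' k :=
  image_subset_image (filter_subset_filter _ h)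

lemma projAsg_subset_lecAsg : projAsg N p ⊆ lecAsg I N (I.lec p) := fun _ hs ↦
  mem_lecAsg.2 ⟨p, mem_projAsg.1 hs, rfl⟩

lemma lecAsg_eq_biUnion : lecAsg I N k = (univ.filter (I.lec · = k)).biUnion (projAsg N) := by
  ext; simp [mem_lecAsg, mem_projAsg, and_comm]

namespace IsMatching

lemma acc (hN : I.IsMatching N) (h : (s, p) ∈ N) : p ∈ I.acc s := hN.1 _ h

lemma eq_of_mem {q : P} (hN : I.IsMatching N) (hp : (s, p) ∈ N) (hq : (s, q) ∈ N) : p = q :=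
  hN.2.1 s p q hp hq

lemma appliesTo (hN : I.IsMatching N) (h : s ∈ lecAsg I N k) : I.AppliesTo k s := by
  obtain ⟨p, hp, rfl⟩ := mem_lecAsg.1 h
  exact ⟨p, hN.acc hp, rfl⟩

lemma card_projAsg_le (hN : I.IsMatching N) (p : P) : #(projAsg N p) ≤ I.c p :=
  card_projAsg.trans_le (hN.2.2.1 p)

lemma card_lecAsg (hN : I.IsMatching N) (hN' : N' ⊆ N) :
    #(lecAsg I N' k) = #(N'.filter (fun x ↦ I.lec x.2 = k)) := by
  refine card_image_of_injOn fun x hx y hy hxy ↦ Prod.ext hxy (hN.eq_of_mem (s := x.1) ?_ ?_)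
  · exact hN' (mem_filter.1 hx).1
  · rw [show x.1 = y.1 from hxy]; exact hN' (mem_filter.1 hy).1

lemma card_lecAsg_le (hN : I.IsMatching N) (k : L) : #(lecAsg I N k) ≤ I.d k :=
  (hN.card_lecAsg subset_rfl).trans_le (hN.2.2.2 k)

lemma pairwise_disjoint_projAsg_sdiff (hN : I.IsMatching N) (N' : Finset (S × P)) :
    Pairwise (Disjoint on projAsg (N \ N')) := fun _ _ hpp' ↦
  disjoint_left.2 fun _ hs hs' ↦ hpp' <|
    hN.eq_of_mem (mem_sdiff.1 (mem_projAsg.1 hs)).1 (mem_sdiff.1 (mem_projAsg.1 hs')).1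

end IsMatching

lemma card_lecAsg_sdiff_le_iff {W M : Finset (S × P)} (hW : I.IsMatching W)
    (hM : I.IsMatching M) :
    #(lecAsg I (W \ M) k) ≤ #(lecAsg I (M \ W) k) ↔ #(lecAsg I W k) ≤ #(lecAsg I M k) := by
  have hfilter (N N' : Finset (S × P)) : (N \ N').filter (fun x ↦ I.lec x.2 = k) =
      N.filter (fun x ↦ I.lec x.2 = k) \ N'.filter (fun x ↦ I.lec x.2 = k) := by
    ext; simp only [mem_filter, mem_sdiff]; tauto
  rw [hW.card_lecAsg sdiff_subset, hM.card_lecAsg sdiff_subset, hW.card_lecAsg subset_rfl,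
    hM.card_lecAsg subset_rfl, hfilter, hfilter]
  exact card_sdiff_le_card_sdiff_iff

end Assignments

section Worst

variable {k : L} {T : Finset S} {s : S}

lemma exists_worstIn (hT : T.Nonempty) (hTk : ∀ t ∈ T, I.AppliesTo k t) :
    ∃ w, I.WorstIn k T w := by
  induction T using Finset.induction_on with
  | empty => exact absurd hT not_nonempty_empty
  | @insert a T haT ih =>
    have ha := hTk a (mem_insert_self a T)
    rcases T.eq_empty_or_nonempty with rfl | hT'
    · exact ⟨a, mem_insert_self a ∅, by simpa using I.lRefl k a ha⟩
    obtain ⟨w, hwT, hw⟩ := ih hT' fun t ht ↦ hTk t (mem_insert_of_mem ht)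
    have hwk := hTk w (mem_insert_of_mem hwT)
    rcases I.lTotal k a w ha hwk with haw | hwa
    · exact ⟨w, mem_insert_of_mem hwT, forall_mem_insert _ _ _ |>.2 ⟨haw, hw⟩⟩
    · refine ⟨a, mem_insert_self a T, forall_mem_insert _ _ _ |>.2 ⟨I.lRefl k a ha, ?_⟩⟩
      exact fun t ht ↦ I.lTrans k t w a (hTk t (mem_insert_of_mem ht)) hwk ha (hw t ht) hwa

lemma forall_lStrict_of_not_lPref_worstIn (hT : T.Nonempty) (hTk : ∀ t ∈ T, I.AppliesTo k t)
    (hs : I.AppliesTo k s) (h : ∀ w, I.WorstIn k T w → ¬I.lPref k s w) :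
    ∀ t ∈ T, I.lStrict k t s := by
  obtain ⟨w, hwT, hw⟩ := exists_worstIn hT hTk
  have hws : I.lPref k w s := (I.lTotal k s w hs (hTk w hwT)).resolve_left (h w ⟨hwT, hw⟩)
  exact fun t ht ↦ ⟨I.lTrans k t w s (hTk t ht) (hTk w hwT) hs (hw t ht) hws,
    fun hst ↦ h w ⟨hwT, hw⟩ (I.lTrans k s t w hs (hTk t ht) (hTk w hwT) hst (hw t ht))⟩

lemma forall_lPref_of_not_lStrict_worstIn (hT : T.Nonempty) (hTk : ∀ t ∈ T, I.AppliesTo k t)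
    (hs : I.AppliesTo k s) (h : ∀ w, I.WorstIn k T w → ¬I.lStrict k s w) :
    ∀ t ∈ T, I.lPref k t s := by
  obtain ⟨w, hwT, hw⟩ := exists_worstIn hT hTk
  have hws : I.lPref k w s := by
    by_contra hws
    exact h w ⟨hwT, hw⟩ ⟨(I.lTotal k s w hs (hTk w hwT)).resolve_right hws, hws⟩
  exact fun t ht ↦ I.lTrans k t w s (hTk t ht) (hTk w hwT) hs (hw t ht) hws

end Worst

section Stability

variable {M W : Finset (S × P)} {s t : S} {p q : P}

lemma SuperStable.forall_lStrict (hM : I.SuperStable M) (hp : p ∈ I.acc s) (hsp : (s, p) ∉ M)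
    (hs : ∀ q, (s, q) ∈ M → ¬I.sStrict s q p) :
    (#(projAsg M p) = I.c p ∧ ∀ t ∈ projAsg M p, I.lStrict (I.lec p) t s) ∨
    (#(lecAsg I M (I.lec p)) = I.d (I.lec p) ∧
      ∀ t ∈ lecAsg I M (I.lec p), I.lStrict (I.lec p) t s) := by
  have hnb : ¬(_ ∨ _ ∨ _) := fun h ↦ hM.2 s p ⟨hp, hsp, hs, h⟩
  have hsk : I.AppliesTo (I.lec p) s := ⟨p, hp, rfl⟩
  rcases (hM.1.card_projAsg_le p).lt_or_eq with hlt | hfull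
  · have hfull : #(lecAsg I M (I.lec p)) = I.d (I.lec p) :=
      (hM.1.card_lecAsg_le _).antisymm (not_lt.1 fun h ↦ hnb (.inl ⟨hlt, h⟩))
    refine .inr ⟨hfull, forall_lStrict_of_not_lPref_worstIn ?_ (fun _ ↦ hM.1.appliesTo) hsk
      fun w hw hsw ↦ hnb (.inr (.inl ⟨hlt, hfull, .inr ⟨w, hw, hsw⟩⟩))⟩
    exact card_pos.1 (hfull ▸ I.dpos _)
  · refine .inl ⟨hfull, forall_lStrict_of_not_lPref_worstIn ?_
      (fun _ ht ↦ hM.1.appliesTo (projAsg_subset_lecAsg ht)) hsk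
      fun w hw hsw ↦ hnb (.inr (.inr ⟨hfull, w, hw, hsw⟩))⟩
    exact card_pos.1 (hfull ▸ I.cpos p)

lemma WeaklyStable.forall_lPref (hW : I.WeaklyStable W) (hq : q ∈ I.acc t) (htq : (t, q) ∉ W)
    (ht : ∀ r, (t, r) ∈ W → I.sStrict t q r) :
    (#(projAsg W q) = I.c q ∧ ∀ u ∈ projAsg W q, I.lPref (I.lec q) u t) ∨
    (#(lecAsg I W (I.lec q)) = I.d (I.lec q) ∧
      ∀ u ∈ lecAsg I W (I.lec q), I.lPref (I.lec q) u t) := by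
  have hnb : ¬(_ ∨ _ ∨ _) := fun h ↦ hW.2 t q ⟨hq, htq, ht, h⟩
  have htk : I.AppliesTo (I.lec q) t := ⟨q, hq, rfl⟩
  rcases (hW.1.card_projAsg_le q).lt_or_eq with hlt | hfull
  · have hfull : #(lecAsg I W (I.lec q)) = I.d (I.lec q) :=
      (hW.1.card_lecAsg_le _).antisymm (not_lt.1 fun h ↦ hnb (.inl ⟨hlt, h⟩))
    refine .inr ⟨hfull, forall_lPref_of_not_lStrict_worstIn ?_ (fun _ ↦ hW.1.appliesTo) htk
      fun w hw htw ↦ hnb (.inr (.inl ⟨hlt, hfull, .inr ⟨w, hw, htw⟩⟩))⟩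
    exact card_pos.1 (hfull ▸ I.dpos _)
  · refine .inl ⟨hfull, forall_lPref_of_not_lStrict_worstIn ?_
      (fun _ hu ↦ hW.1.appliesTo (projAsg_subset_lecAsg hu)) htk
      fun w hw htw ↦ hnb (.inr (.inr ⟨hfull, w, hw, htw⟩))⟩
    exact card_pos.1 (hfull ▸ I.cpos q)

end Stability

section Exchange

variable {M W : Finset (S × P)} {R : Finset (S × S)} {s t : S} {p q : P}

abbrev IsExchangePairing (I : SPAST S P L) (W M : Finset (S × P)) (R : Finset (S × S)) : Prop :=
  IsBlockPairing (projAsg (W \ M)) (projAsg (M \ W)) (lecAsg I (W \ M)) (lecAsg I (M \ W)) R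

lemma exists_isExchangePairing (hW : I.IsMatching W) (hM : I.IsMatching M) :
    ∃ R, I.IsExchangePairing W M R :=
  exists_isBlockPairing I.lec (hW.pairwise_disjoint_projAsg_sdiff M)
    (hM.pairwise_disjoint_projAsg_sdiff W) (fun _ ↦ lecAsg_eq_biUnion) fun _ ↦ lecAsg_eq_biUnion

def WeaklyPrefers (I : SPAST S P L) (W M : Finset (S × P)) (s : S) : Prop :=
  ∃ p, (s, p) ∈ W \ M ∧ ∀ q, (s, q) ∈ M → ¬I.sStrict s q p

def StrictlyPrefers (I : SPAST S P L) (M W : Finset (S × P)) (t : S) : Prop :=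
  ∃ q, (t, q) ∈ M \ W ∧ ∀ r, (t, r) ∈ W → I.sStrict t q r

lemma weaklyPrefers_of_not_strictlyPrefers (hM : I.IsMatching M) (htq : (t, q) ∈ M \ W)
    (h : ¬I.StrictlyPrefers M W t) : I.WeaklyPrefers W M t := by
  obtain ⟨htM, htW⟩ := mem_sdiff.1 htq
  obtain ⟨r, htr, hr⟩ : ∃ r, (t, r) ∈ W ∧ ¬I.sStrict t q r := by
    by_contra! h'
    exact h ⟨q, htq, h'⟩
  refine ⟨r, mem_sdiff.2 ⟨htr, fun htr' ↦ htW (hM.eq_of_mem htr' htM ▸ htr)⟩, fun q' htq' ↦ ?_⟩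
  rwa [hM.eq_of_mem htq' htM]

lemma strictlyPrefers_of_not_weaklyPrefers (hW : I.IsMatching W) (hsp : (s, p) ∈ W \ M)
    (h : ¬I.WeaklyPrefers W M s) : I.StrictlyPrefers M W s := by
  obtain ⟨hsW, hsM⟩ := mem_sdiff.1 hsp
  obtain ⟨q, hsq, hq⟩ : ∃ q, (s, q) ∈ M ∧ I.sStrict s q p := by
    by_contra! h'
    exact h ⟨p, hsp, h'⟩
  refine ⟨q, mem_sdiff.2 ⟨hsq, fun hsq' ↦ ?_⟩, fun r hsr ↦ hW.eq_of_mem hsr hsW ▸ hq⟩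
  obtain rfl := hW.eq_of_mem hsq' hsW
  exact hq.2 hq.1

lemma exists_lStrict_of_superStable (hM : I.SuperStable M) (hW : I.IsMatching W)
    (hR : I.IsExchangePairing W M R) (hsp : (s, p) ∈ W \ M)
    (hs : ∀ q, (s, q) ∈ M → ¬I.sStrict s q p) :
    ∃ t ∈ lecAsg I (M \ W) (I.lec p), (s, t) ∈ R ∧ I.lStrict (I.lec p) t s := by
  obtain ⟨hsW, hsM⟩ := mem_sdiff.1 hsp
  rcases hM.forall_lStrict (hW.acc hsW) hsM hs with ⟨hfull, hbeat⟩ | ⟨hfull, hbeat⟩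
  · obtain ⟨t, ht, hst⟩ := hR.block_snd p
      (card_projAsg_sdiff_le_iff.2 (hfull ▸ hW.card_projAsg_le p)) s (mem_projAsg.2 hsp)
    exact ⟨t, projAsg_subset_lecAsg ht, hst, hbeat t (projAsg_mono sdiff_subset ht)⟩
  · obtain ⟨t, ht, hst⟩ := hR.superblock_snd _
      ((card_lecAsg_sdiff_le_iff hW hM.1).2 (hfull ▸ hW.card_lecAsg_le _)) s
      (mem_lecAsg.2 ⟨p, hsp, rfl⟩)
    exact ⟨t, ht, hst, hbeat t (lecAsg_mono sdiff_subset ht)⟩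

lemma exists_lPref_of_weaklyStable (hW : I.WeaklyStable W) (hM : I.IsMatching M)
    (hR : I.IsExchangePairing W M R) (htq : (t, q) ∈ M \ W)
    (ht : ∀ r, (t, r) ∈ W → I.sStrict t q r) :
    ∃ s ∈ lecAsg I (W \ M) (I.lec q), (s, t) ∈ R ∧ I.lPref (I.lec q) s t := by
  obtain ⟨htM, htW⟩ := mem_sdiff.1 htq
  rcases hW.forall_lPref (hM.acc htM) htW ht with ⟨hfull, hbeat⟩ | ⟨hfull, hbeat⟩
  · obtain ⟨s, hs, hst⟩ := hR.block_fst q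
      (card_projAsg_sdiff_le_iff.2 (hfull ▸ hM.card_projAsg_le q)) t (mem_projAsg.2 htq)
    exact ⟨s, projAsg_subset_lecAsg hs, hst, hbeat s (projAsg_mono sdiff_subset hs)⟩
  · obtain ⟨s, hs, hst⟩ := hR.superblock_fst _
      ((card_lecAsg_sdiff_le_iff hM hW.1).2 (hfull ▸ hM.card_lecAsg_le _)) t
      (mem_lecAsg.2 ⟨q, htq, rfl⟩)
    exact ⟨s, hs, hst, hbeat s (lecAsg_mono sdiff_subset hs)⟩

lemma WeaklyPrefers.exists_pair (hM : I.SuperStable M) (hW : I.WeaklyStable W)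
    (hR : I.IsExchangePairing W M R) (hs : I.WeaklyPrefers W M s) :
    ∃ t, (s, t) ∈ R ∧ I.WeaklyPrefers W M t := by
  obtain ⟨p, hsp, hpref⟩ := hs
  obtain ⟨t, ht, hst, hts⟩ := exists_lStrict_of_superStable hM hW.1 hR hsp hpref
  obtain ⟨q, htq, hq⟩ := mem_lecAsg.1 ht
  refine ⟨t, hst, weaklyPrefers_of_not_strictlyPrefers hM.1 htq fun ⟨q', htq', hpref'⟩ ↦ ?_⟩
  obtain rfl := hM.1.eq_of_mem (mem_sdiff.1 htq').1 (mem_sdiff.1 htq).1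
  obtain ⟨s', -, hs't, hst'⟩ := exists_lPref_of_weaklyStable hW hM.1 hR htq' hpref'
  obtain rfl := hR.fst_eq hs't hst
  exact hts.2 (hq ▸ hst')

lemma StrictlyPrefers.exists_pair (hM : I.SuperStable M) (hW : I.WeaklyStable W)
    (hR : I.IsExchangePairing W M R) (ht : I.StrictlyPrefers M W t) :
    ∃ s, (s, t) ∈ R ∧ I.StrictlyPrefers M W s := by
  obtain ⟨q, htq, hpref⟩ := ht
  obtain ⟨s, hs, hst, hst'⟩ := exists_lPref_of_weaklyStable hW hM.1 hR htq hpref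
  obtain ⟨p, hsp, hp⟩ := mem_lecAsg.1 hs
  refine ⟨s, hst, strictlyPrefers_of_not_weaklyPrefers hW.1 hsp fun ⟨p', hsp', hpref'⟩ ↦ ?_⟩
  obtain rfl := hW.1.eq_of_mem (mem_sdiff.1 hsp').1 (mem_sdiff.1 hsp).1
  obtain ⟨t', -, hst'', hts⟩ := exists_lStrict_of_superStable hM hW.1 hR hsp' hpref'
  obtain rfl := hR.snd_eq hst hst''
  exact hts.2 (hp ▸ hst')

end Exchange

variable {M W : Finset (S × P)}

theorem card_lecAsg_superStable_le (hM : I.SuperStable M) (hW : I.WeaklyStable W) (k : L) :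
    #(lecAsg I M k) ≤ #(lecAsg I W k) := by
  by_contra! hlt
  obtain ⟨R, hR⟩ := exists_isExchangePairing hW.1 hM.1
  obtain ⟨t, ht, hfree⟩ := hR.exists_snd_unpaired <|
    lt_of_not_ge fun h ↦ ((card_lecAsg_sdiff_le_iff hM.1 hW.1).1 h).not_gt hlt
  obtain ⟨q, htq, -⟩ := mem_lecAsg.1 ht
  have hweak : I.WeaklyPrefers W M t := weaklyPrefers_of_not_strictlyPrefers hM.1 htq
    fun hstrict ↦ by
      obtain ⟨s, hst, -⟩ := hstrict.exists_pair hM hW hR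
      exact hfree s hst
  obtain ⟨s, hst⟩ := exists_rel_of_forall_exists_rel (ρ := fun s t ↦ (s, t) ∈ R)
    (V := univ.filter (I.WeaklyPrefers W M)) hR.fst_eq
    (fun s hs ↦ by
      obtain ⟨t, hst, ht⟩ := (mem_filter.1 hs).2.exists_pair hM hW hR
      exact ⟨t, mem_filter.2 ⟨mem_univ t, ht⟩, hst⟩)
    (mem_filter.2 ⟨mem_univ t, hweak⟩)
  exact hfree s hst

theorem card_lecAsg_le_superStable (hM : I.SuperStable M) (hW : I.WeaklyStable W) (k : L) :
    #(lecAsg I W k) ≤ #(lecAsg I M k) := by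
  by_contra! hlt
  obtain ⟨R, hR⟩ := exists_isExchangePairing hW.1 hM.1
  obtain ⟨s, hs, hfree⟩ := hR.exists_fst_unpaired <|
    lt_of_not_ge fun h ↦ ((card_lecAsg_sdiff_le_iff hW.1 hM.1).1 h).not_gt hlt
  obtain ⟨p, hsp, -⟩ := mem_lecAsg.1 hs
  have hstrict : I.StrictlyPrefers M W s := strictlyPrefers_of_not_weaklyPrefers hW.1 hsp
    fun hweak ↦ by
      obtain ⟨t, hst, -⟩ := hweak.exists_pair hM hW hR
      exact hfree t hst
  obtain ⟨t, hst⟩ := exists_rel_of_forall_exists_rel (ρ := fun t s ↦ (s, t) ∈ R)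
    (V := univ.filter (I.StrictlyPrefers M W)) hR.snd_eq
    (fun t ht ↦ by
      obtain ⟨s, hst, hs⟩ := (mem_filter.1 ht).2.exists_pair hM hW hR
      exact ⟨s, mem_filter.2 ⟨mem_univ s, hs⟩, hst⟩)
    (mem_filter.2 ⟨mem_univ s, hstrict⟩)
  exact hfree t hst

theorem card_lecAsg_eq_superStable (hM : I.SuperStable M) (hW : I.WeaklyStable W) (k : L) :
    #(lecAsg I W k) = #(lecAsg I M k) :=
  (card_lecAsg_le_superStable hM hW k).antisymm (card_lecAsg_superStable_le hM hW k)

end SPAST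

open SPAST in
theorem weakly_stable_lecturer_counts_eq_of_super_stable_exists {S P L : Type} [Fintype S] [Fintype P] [Fintype L]
    [DecidableEq S] [DecidableEq P] [DecidableEq L]
    (I : SPAST S P L) (hss : ∃ M : Finset (S × P), SuperStable I M)
    (M1 M2 : Finset (S × P)) (h1 : WeaklyStable I M1) (h2 : WeaklyStable I M2) :
    ∀ k : L, (lecAsg I M1 k).card = (lecAsg I M2 k).card := by
  obtain ⟨M, hM⟩ := hss
  exact fun k ↦ (card_lecAsg_eq_superStable hM h1 k).trans
    (card_lecAsg_eq_superStable hM h2 k).symm
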